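/- arXiv:1705.05176 — 2 statements merged into one kernel-verified Lean document; each statement's English description precedes it below -/
import Mathlib

section
/- Let G be a finite simple graph with m edges, let t = C(m,2) + 1, and let G′ be the disjoint union of G and a star K_{1,t} (one center adjacent to t leaves, vertex-disjoint from G). Then every straight-line drawing ρ of G′ satisfies cr(ρ) < t·(mcut(G) + 1), and there exists a straight-line drawing ρ of G′ with cr(ρ) ≥ t·mcut(G). Consequently, the maximum of cr over all straight-line drawings of G′, divided by t and rounded down, equals mcut(G). -/
/-- Two edges (as unordered pairs of vertices) share no endpoint, i.e. they are independent. -/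
def Sym2Indep {V : Type*} (e f : Sym2 V) : Prop := ∀ x : V, x ∈ e → x ∉ f

/-- `M(G)`: the number of unordered pairs of edges of `G` that share no endpoint. -/
noncomputable def indepPairs {V : Type*} (G : SimpleGraph V) : ℕ :=
  {p : Sym2 (Sym2 V) | ∃ e f : Sym2 V,
    p = s(e, f) ∧ e ∈ G.edgeSet ∧ f ∈ G.edgeSet ∧ Sym2Indep e f}.ncard

/-- The independent edges `e` and `f` cross in the straight-line drawing `ρ`:
the corresponding open segments have a common point. -/
def SLCross {V : Type*} (ρ : V → ℝ × ℝ) (e f : Sym2 V) : Prop :=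
  Sym2Indep e f ∧ ∃ a b c d : V, e = s(a, b) ∧ f = s(c, d) ∧
    (openSegment ℝ (ρ a) (ρ b) ∩ openSegment ℝ (ρ c) (ρ d)).Nonempty

/-- `cr(ρ)`: the number of unordered pairs of edges of `G` that cross in the
straight-line drawing `ρ`. -/
noncomputable def slCr {V : Type*} (G : SimpleGraph V) (ρ : V → ℝ × ℝ) : ℕ :=
  {p : Sym2 (Sym2 V) | ∃ e f : Sym2 V,
    p = s(e, f) ∧ e ∈ G.edgeSet ∧ f ∈ G.edgeSet ∧ SLCross ρ e f}.ncard

/-- `ρ` is a straight-line drawing of `G`: it is injective and no vertex image lies on the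
closed segment joining the images of the endpoints of an edge not containing it. -/
def IsSLDrawing {V : Type*} (G : SimpleGraph V) (ρ : V → ℝ × ℝ) : Prop :=
  Function.Injective ρ ∧
    ∀ a b : V, G.Adj a b → ∀ v : V, v ≠ a → v ≠ b → ρ v ∉ segment ℝ (ρ a) (ρ b)

/-- `mcut(G)`: the maximum, over all vertex subsets `S`, of the number of edges of `G`
with exactly one endpoint in `S`. -/
noncomputable def maxCut {V : Type*} (G : SimpleGraph V) : ℕ :=
  sSup {k : ℕ | ∃ S : Set V,
    {e ∈ G.edgeSet | ∃ a b : V, e = s(a, b) ∧ a ∈ S ∧ b ∉ S}.ncard = k}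

/-- The disjoint union of `G` and a star `K_{1,t}`: the star has center `Sum.inr 0` and
the `t` leaves `Sum.inr j` for `j ≠ 0`. -/
def disjUnionStar {V : Type*} (G : SimpleGraph V) (t : ℕ) :
    SimpleGraph (V ⊕ Fin (t + 1)) :=
  SimpleGraph.fromEdgeSet
    ({p : Sym2 (V ⊕ Fin (t + 1)) | ∃ a b : V, G.Adj a b ∧ p = s(Sum.inl a, Sum.inl b)} ∪
     {p : Sym2 (V ⊕ Fin (t + 1)) | ∃ j : Fin (t + 1), j ≠ 0 ∧ p = s(Sum.inr 0, Sum.inr j)})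

/-
In a straight-line drawing of `G + K_{1,t}` no two star edges cross, the edges of `G` cross
each other at most `C(m, 2) < t` times, and the edges of `G` crossed by the star edge to a leaf
`ℓ` have their endpoints strictly on opposite sides of the line through the center and `ℓ`
(the drawing puts no vertex on an edge it does not belong to), so they form a cut. Hence
`cr ≤ C(m, 2) + t · mcut(G) < t · (mcut(G) + 1)`. Conversely, place all vertices on the parabola
`y = x²`, from left to right: the leaves, one side `S` of a maximum cut, the center, the rest
of `V`. Chords of a convex curve with interleaved endpoints cross, so every star edge crosses
every edge of the cut, giving `t · mcut(G)` crossings.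
-/

open Set Function

-- Twice the signed area of the triangle `p q x`.
def orient (p q x : ℝ × ℝ) : ℝ :=
  (q.1 - p.1) * (x.2 - p.2) - (q.2 - p.2) * (x.1 - p.1)

theorem orient_lineMap (p q r s : ℝ × ℝ) (c : ℝ) :
    orient p q (AffineMap.lineMap r s c) = (1 - c) * orient p q r + c * orient p q s := by
  simp only [orient, AffineMap.lineMap_apply_module, Prod.fst_add, Prod.snd_add,
    Prod.smul_fst, Prod.smul_snd, smul_eq_mul]
  ring

theorem orient_eq_zero_of_mem_segment {p q x : ℝ × ℝ} (hx : x ∈ segment ℝ p q) :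
    orient p q x = 0 := by
  obtain ⟨c, -, rfl⟩ := (segment_eq_image_lineMap ℝ p q).subset hx
  rw [orient_lineMap]
  simp only [orient]
  ring

theorem exists_lineMap_eq_of_orient_eq_zero {p q x : ℝ × ℝ} (hpq : p ≠ q)
    (hx : orient p q x = 0) : ∃ α : ℝ, AffineMap.lineMap p q α = x := by
  simp only [orient] at hx
  have key : ∀ α : ℝ, AffineMap.lineMap p q α = x ↔
      x.1 - p.1 = α * (q.1 - p.1) ∧ x.2 - p.2 = α * (q.2 - p.2) := by
    intro α
    simp only [AffineMap.lineMap_apply_module, Prod.ext_iff, Prod.fst_add, Prod.snd_add,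
      Prod.smul_fst, Prod.smul_snd, smul_eq_mul]
    constructor <;> rintro ⟨h1, h2⟩ <;> constructor <;> linarith
  by_cases h1 : q.1 - p.1 = 0
  · have h2 : q.2 - p.2 ≠ 0 := fun h2 =>
      hpq (Prod.ext (by linarith) (by linarith))
    refine ⟨(x.2 - p.2) / (q.2 - p.2), (key _).2 ⟨?_, by field_simp⟩⟩
    rw [h1] at hx ⊢
    field_simp
    nlinarith
  · refine ⟨(x.1 - p.1) / (q.1 - p.1), (key _).2 ⟨by field_simp, ?_⟩⟩
    field_simp
    linarith

theorem zero_mem_segment_of_not_mem_Icc {α β b : ℝ} (hα : α ∉ Icc 0 1) (hβ : β ∉ Icc 0 1)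
    (hb : b ∈ Ioo 0 1 ∩ openSegment ℝ α β) : 0 ∈ segment ℝ α β := by
  obtain ⟨⟨hb0, hb1⟩, c, e, hc, he, hce, rfl⟩ := hb
  simp only [mem_Icc, not_and_or, not_le] at hα hβ
  simp only [smul_eq_mul] at hb0 hb1
  rw [segment_eq_uIcc, mem_uIcc]
  rcases hα with hα | hα <;> rcases hβ with hβ | hβ
  · nlinarith
  · exact Or.inl ⟨hα.le, by linarith⟩
  · exact Or.inr ⟨hβ.le, by linarith⟩
  · nlinarith

theorem mem_segment_of_lineMap_of_openSegment_inter {p q : ℝ × ℝ} (hpq : p ≠ q) {α β : ℝ}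
    (hr : AffineMap.lineMap p q α ∉ segment ℝ p q)
    (hs : AffineMap.lineMap p q β ∉ segment ℝ p q)
    (hne : (openSegment ℝ p q ∩
      openSegment ℝ (AffineMap.lineMap p q α) (AffineMap.lineMap p q β)).Nonempty) :
    p ∈ segment ℝ (AffineMap.lineMap p q α) (AffineMap.lineMap p q β) := by
  set L : ℝ →ᵃ[ℝ] ℝ × ℝ := AffineMap.lineMap p q
  have hL : Injective L := AffineMap.lineMap_injective ℝ hpq
  rw [segment_eq_image_lineMap ℝ] at hr hs
  rw [openSegment_eq_image_lineMap ℝ, ← image_openSegment, ← image_inter hL] at hne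
  have h0 := mem_image_of_mem L (zero_mem_segment_of_not_mem_Icc
    (fun h => hr (mem_image_of_mem L h)) (fun h => hs (mem_image_of_mem L h))
    hne.of_image.some_mem)
  rwa [image_segment, AffineMap.lineMap_apply_zero] at h0

theorem orient_mul_orient_neg {p q r s : ℝ × ℝ}
    (hr : r ∉ segment ℝ p q) (hs : s ∉ segment ℝ p q) (hp : p ∉ segment ℝ r s)
    (hne : (openSegment ℝ p q ∩ openSegment ℝ r s).Nonempty) :
    orient p q r * orient p q s < 0 := by
  obtain ⟨z, hzpq, hzrs⟩ := hne
  have hpq : p ≠ q := by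
    rintro rfl
    rw [openSegment_same, mem_singleton_iff] at hzpq
    exact hp (hzpq ▸ openSegment_subset_segment ℝ r s hzrs)
  obtain ⟨c, ⟨hc0, hc1⟩, rfl⟩ := (openSegment_eq_image_lineMap ℝ r s).subset hzrs
  have hz : (1 - c) * orient p q r + c * orient p q s = 0 := by
    rw [← orient_lineMap]
    exact orient_eq_zero_of_mem_segment (openSegment_subset_segment ℝ p q hzpq)
  -- If `r` is on the line `pq`, then so is `s` by `hz`, and the previous lemma applies.
  by_cases hr0 : orient p q r = 0
  · obtain ⟨α, rfl⟩ := exists_lineMap_eq_of_orient_eq_zero hpq hr0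
    obtain ⟨β, rfl⟩ := exists_lineMap_eq_of_orient_eq_zero hpq (by
      rw [hr0] at hz
      simpa [hc0.ne'] using hz)
    exact absurd (mem_segment_of_lineMap_of_openSegment_inter hpq hr hs ⟨_, hzpq, hzrs⟩) hp
  · have hsq : 0 < (1 - c) * orient p q r ^ 2 := by positivity
    have key : c * (orient p q r * orient p q s) = -((1 - c) * orient p q r ^ 2) := by
      linear_combination orient p q r * hz
    nlinarith

def parabola (x : ℝ) : ℝ × ℝ := (x, x ^ 2)

theorem orient_parabola (x y z : ℝ) :
    orient (parabola x) (parabola y) (parabola z) = (y - x) * (z - x) * (z - y) := by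
  simp only [orient, parabola]
  ring

theorem parabola_not_mem_segment {x y z : ℝ} (hxz : z ≠ x) (hyz : z ≠ y) (hxy : x ≠ y) :
    parabola z ∉ segment ℝ (parabola x) (parabola y) := fun h => by
  have := orient_eq_zero_of_mem_segment h
  rw [orient_parabola] at this
  simp [sub_eq_zero, hxz, hyz, hxy.symm] at this

-- The chords over `[w, y]` and `[x, z]` lie on the lines `Y = (w + y) X - w y` and
-- `Y = (x + z) X - x z`, which meet above `u`.
theorem openSegment_parabola_inter_nonempty {w x y z : ℝ} (hwx : w < x) (hxy : x < y)
    (hyz : y < z) :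
    (openSegment ℝ (parabola w) (parabola y) ∩
      openSegment ℝ (parabola x) (parabola z)).Nonempty := by
  have hD : w + y - x - z < 0 := by linarith
  set u := (w * y - x * z) / (w + y - x - z)
  have hxu : x < u := by rw [lt_div_iff_of_neg hD]; nlinarith
  have huy : u < y := by rw [div_lt_iff_of_neg hD]; nlinarith
  have chord : ∀ {a b : ℝ}, a < u → u < b →
      (u, (a + b) * u - a * b) ∈ openSegment ℝ (parabola a) (parabola b) := by
    intro a b hau hub
    have hab : b - a ≠ 0 := by linarith
    refine ⟨(b - u) / (b - a), (u - a) / (b - a), by apply div_pos <;> linarith,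
      by apply div_pos <;> linarith, by field_simp; ring, ?_⟩
    simp only [parabola, Prod.ext_iff, Prod.fst_add, Prod.snd_add, Prod.smul_fst,
      Prod.smul_snd, smul_eq_mul]
    constructor <;> field_simp <;> ring
  have hu : u * (w + y - x - z) = w * y - x * z := div_mul_cancel₀ _ hD.ne
  refine ⟨_, chord (hwx.trans hxu) huy, ?_⟩
  convert chord hxu (huy.trans hyz) using 2
  linear_combination hu

theorem slCross_mk_iff {W : Type*} {ρ : W → ℝ × ℝ} {u v a b : W} :
    SLCross ρ s(u, v) s(a, b) ↔ Sym2Indep s(u, v) s(a, b) ∧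
      (openSegment ℝ (ρ u) (ρ v) ∩ openSegment ℝ (ρ a) (ρ b)).Nonempty := by
  have seg : ∀ {u v u' v' : W}, s(u, v) = s(u', v') →
      openSegment ℝ (ρ u') (ρ v') = openSegment ℝ (ρ u) (ρ v) := by
    intro u v u' v' h
    rcases Sym2.eq_iff.1 h with ⟨rfl, rfl⟩ | ⟨rfl, rfl⟩
    · rfl
    · exact openSegment_symm ℝ _ _
  constructor
  · rintro ⟨hind, a', b', c', d', h1, h2, hne⟩
    rw [seg h1, seg h2] at hne
    exact ⟨hind, hne⟩
  · rintro ⟨hind, hne⟩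
    exact ⟨hind, u, v, a, b, rfl, rfl, hne⟩

theorem SLCross.symm {W : Type*} {ρ : W → ℝ × ℝ} {e f : Sym2 W} (h : SLCross ρ e f) :
    SLCross ρ f e := by
  obtain ⟨hind, a, b, c, d, rfl, rfl, z, hz⟩ := h
  exact ⟨fun x hx hx' => hind x hx' hx, c, d, a, b, rfl, rfl, z, hz.2, hz.1⟩

theorem IsSLDrawing.orient_mul_neg_of_slCross {W : Type*} {H : SimpleGraph W} {ρ : W → ℝ × ℝ}
    (hρ : IsSLDrawing H ρ) {u v a b : W} (huv : H.Adj u v) (hab : H.Adj a b)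
    (h : SLCross ρ s(u, v) s(a, b)) :
    orient (ρ u) (ρ v) (ρ a) * orient (ρ u) (ρ v) (ρ b) < 0 := by
  obtain ⟨hind, hne⟩ := slCross_mk_iff.1 h
  have hu := hind u (Sym2.mem_mk_left u v)
  have hv := hind v (Sym2.mem_mk_right u v)
  simp only [Sym2.mem_iff, not_or] at hu hv
  exact orient_mul_orient_neg (hρ.2 u v huv a (Ne.symm hu.1) (Ne.symm hv.1))
    (hρ.2 u v huv b (Ne.symm hu.2) (Ne.symm hv.2)) (hρ.2 a b hab u hu.1 hu.2) hne

theorem isSLDrawing_parabola_comp {W : Type*} (H : SimpleGraph W) {χ : W → ℝ}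
    (hχ : Injective χ) : IsSLDrawing H (parabola ∘ χ) :=
  ⟨fun _ _ h => hχ (congrArg Prod.fst h), fun _ _ hab _ hva hvb =>
    parabola_not_mem_segment (hχ.ne hva) (hχ.ne hvb) (hχ.ne (H.ne_of_adj hab))⟩

def cutSet {V : Type*} (G : SimpleGraph V) (S : Set V) : Set (Sym2 V) :=
  {e ∈ G.edgeSet | ∃ a b : V, e = s(a, b) ∧ a ∈ S ∧ b ∉ S}

theorem mem_cutSet_of_mul_neg {V : Type*} {G : SimpleGraph V} {f : V → ℝ} {a b : V}
    (hab : G.Adj a b) (h : f a * f b < 0) : s(a, b) ∈ cutSet G {v | 0 < f v} := by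
  refine ⟨hab, ?_⟩
  rcases mul_neg_iff.1 h with ⟨ha, hb⟩ | ⟨ha, hb⟩
  · exact ⟨a, b, rfl, ha, hb.not_gt⟩
  · exact ⟨b, a, Sym2.eq_swap, hb, ha.not_gt⟩

section MaxCut

variable {V : Type*} [Finite V] (G : SimpleGraph V)

theorem bddAbove_ncard_cutSet : BddAbove {k : ℕ | ∃ S : Set V, (cutSet G S).ncard = k} :=
  ⟨G.edgeSet.ncard, by rintro k ⟨S, rfl⟩; exact ncard_le_ncard fun e he => he.1⟩

theorem ncard_cutSet_le_maxCut (S : Set V) : (cutSet G S).ncard ≤ maxCut G :=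
  le_csSup (bddAbove_ncard_cutSet G) ⟨S, rfl⟩

theorem exists_ncard_cutSet_eq_maxCut : ∃ S : Set V, (cutSet G S).ncard = maxCut G :=
  Nat.sSup_mem (s := {k : ℕ | ∃ S : Set V, (cutSet G S).ncard = k}) ⟨_, ∅, rfl⟩
    (bddAbove_ncard_cutSet G)

end MaxCut

def crossingPairs {W : Type*} (H : SimpleGraph W) (ρ : W → ℝ × ℝ) : Set (Sym2 (Sym2 W)) :=
  {p | ∃ e f : Sym2 W, p = s(e, f) ∧ e ∈ H.edgeSet ∧ f ∈ H.edgeSet ∧ SLCross ρ e f}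

theorem slCr_eq_ncard_crossingPairs {W : Type*} (H : SimpleGraph W) (ρ : W → ℝ × ℝ) :
    slCr H ρ = (crossingPairs H ρ).ncard := rfl

section DisjUnionStar

variable {V : Type*} {G : SimpleGraph V} {t : ℕ}

theorem mem_edgeSet_disjUnionStar {e : Sym2 (V ⊕ Fin (t + 1))} :
    e ∈ (disjUnionStar G t).edgeSet ↔
      (∃ a b : V, G.Adj a b ∧ e = s(Sum.inl a, Sum.inl b)) ∨
      (∃ j : Fin (t + 1), j ≠ 0 ∧ e = s(Sum.inr 0, Sum.inr j)) := by
  simp only [disjUnionStar, SimpleGraph.edgeSet_fromEdgeSet, mem_sdiff, mem_union,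
    mem_ofPred_eq, and_iff_left_iff_imp]
  rintro (⟨a, b, hab, rfl⟩ | ⟨j, hj, rfl⟩)
  · simp [hab.ne]
  · simp [Ne.symm hj]

theorem disjUnionStar_adj_inl {a b : V} (h : G.Adj a b) :
    (disjUnionStar G t).Adj (Sum.inl a) (Sum.inl b) :=
  mem_edgeSet_disjUnionStar.2 (Or.inl ⟨a, b, h, rfl⟩)

theorem disjUnionStar_adj_inr_zero {j : Fin (t + 1)} (hj : j ≠ 0) :
    (disjUnionStar G t).Adj (Sum.inr 0) (Sum.inr j) :=
  mem_edgeSet_disjUnionStar.2 (Or.inr ⟨j, hj, rfl⟩)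

theorem crossingPairs_disjUnionStar_subset {ρ : V ⊕ Fin (t + 1) → ℝ × ℝ}
    (hρ : IsSLDrawing (disjUnionStar G t) ρ) :
    crossingPairs (disjUnionStar G t) ρ ⊆
      Sym2.map (fun e : G.edgeSet => Sym2.map Sum.inl e.1) '' Sym2.diagSetᶜ ∪
      ⋃ j ∈ Finset.univ.erase 0, (fun e => s(s(Sum.inr 0, Sum.inr j), Sym2.map Sum.inl e)) ''
        cutSet G {v | 0 < orient (ρ (Sum.inr 0)) (ρ (Sum.inr j)) (ρ (Sum.inl v))} := by
  rintro p ⟨e, f, rfl, he, hf, hcross⟩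
  rcases mem_edgeSet_disjUnionStar.1 he with ⟨a, b, hab, rfl⟩ | ⟨j, hj, rfl⟩ <;>
    rcases mem_edgeSet_disjUnionStar.1 hf with ⟨c, d, hcd, rfl⟩ | ⟨k, hk, rfl⟩
  · refine Or.inl ⟨s(⟨s(a, b), hab⟩, ⟨s(c, d), hcd⟩), fun hdiag => ?_, rfl⟩
    have hef : s(a, b) = s(c, d) := congrArg Subtype.val (Sym2.mk_isDiag_iff.1 hdiag)
    have ha : a ∈ s(c, d) := hef ▸ Sym2.mem_mk_left a b
    exact hcross.1 (Sum.inl a) (Sym2.mem_mk_left _ _) (by simpa using ha)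
  · refine Or.inr (mem_iUnion₂.2 ⟨k, Finset.mem_erase.2 ⟨hk, Finset.mem_univ _⟩,
      s(a, b), mem_cutSet_of_mul_neg hab ?_, Sym2.eq_swap⟩)
    exact hρ.orient_mul_neg_of_slCross (disjUnionStar_adj_inr_zero hk)
      (disjUnionStar_adj_inl hab) hcross.symm
  · refine Or.inr (mem_iUnion₂.2 ⟨j, Finset.mem_erase.2 ⟨hj, Finset.mem_univ _⟩,
      s(c, d), mem_cutSet_of_mul_neg hcd ?_, rfl⟩)
    exact hρ.orient_mul_neg_of_slCross (disjUnionStar_adj_inr_zero hj)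
      (disjUnionStar_adj_inl hcd) hcross
  · exact absurd (Sym2.mem_mk_left _ _) (hcross.1 (Sum.inr 0) (Sym2.mem_mk_left _ _))

theorem slCr_disjUnionStar_le [Finite V] {ρ : V ⊕ Fin (t + 1) → ℝ × ℝ}
    (hρ : IsSLDrawing (disjUnionStar G t) ρ) :
    slCr (disjUnionStar G t) ρ ≤ G.edgeSet.ncard.choose 2 + t * maxCut G := by
  rw [slCr_eq_ncard_crossingPairs]
  refine (ncard_le_ncard (crossingPairs_disjUnionStar_subset hρ)).trans
    ((ncard_union_le _ _).trans (add_le_add ?_ ?_))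
  · calc _ ≤ (Sym2.diagSetᶜ : Set (Sym2 G.edgeSet)).ncard := ncard_image_le (toFinite _)
      _ = G.edgeSet.ncard.choose 2 := by rw [Sym2.ncard_diagSet_compl, Nat.card_coe_set_eq]
  · calc _ ≤ ∑ j ∈ Finset.univ.erase (0 : Fin (t + 1)), maxCut G :=
          (Finset.set_ncard_biUnion_le _ _).trans <| Finset.sum_le_sum fun j _ =>
            (ncard_image_le (toFinite _)).trans (ncard_cutSet_le_maxCut G _)
      _ = t * maxCut G := by simp

theorem mul_ncard_cutSet_le_slCr [Finite V] (S : Set V) {ρ : V ⊕ Fin (t + 1) → ℝ × ℝ}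
    (hcross : ∀ j ≠ 0, ∀ a ∈ S, ∀ b ∉ S, (openSegment ℝ (ρ (Sum.inr 0)) (ρ (Sum.inr j)) ∩
      openSegment ℝ (ρ (Sum.inl a)) (ρ (Sum.inl b))).Nonempty) :
    t * (cutSet G S).ncard ≤ slCr (disjUnionStar G t) ρ := by
  set Φ : Fin (t + 1) × Sym2 V → Sym2 (Sym2 (V ⊕ Fin (t + 1))) :=
    fun q => s(s(Sum.inr 0, Sum.inr q.1), Sym2.map Sum.inl q.2)
  have hΦ : Injective Φ := by
    rintro ⟨j, e⟩ ⟨k, f⟩ h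
    rcases Sym2.eq_iff.1 h with ⟨hjk, hef⟩ | ⟨hjf, -⟩
    · exact Prod.ext (Sum.inr_injective (Sym2.congr_right.1 hjk))
        (Sym2.map.injective Sum.inl_injective hef)
    · obtain ⟨_, -, h0⟩ := Sym2.mem_map.1 (hjf ▸ Sym2.mem_mk_left _ _)
      exact absurd h0 Sum.inl_ne_inr
  have hsub : Φ '' ({j | j ≠ 0} ×ˢ cutSet G S) ⊆ crossingPairs (disjUnionStar G t) ρ := by
    rintro _ ⟨⟨j, e⟩, ⟨hj, he, a, b, rfl, ha, hb⟩, rfl⟩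
    refine ⟨_, _, rfl, disjUnionStar_adj_inr_zero hj, disjUnionStar_adj_inl he,
      slCross_mk_iff.2 ⟨?_, hcross j hj a ha b hb⟩⟩
    show Sym2Indep s(Sum.inr 0, Sum.inr j) s(Sum.inl a, Sum.inl b)
    intro x hx hx'
    rcases Sym2.mem_iff.1 hx with rfl | rfl <;>
      rcases Sym2.mem_iff.1 hx' with h | h <;> exact Sum.inr_ne_inl h
  have hleaves : {j : Fin (t + 1) | j ≠ 0}.ncard = t := by
    rw [ncard_eq_toFinset_card']
    simp [Finset.filter_ne']
  calc t * (cutSet G S).ncard = ({j | j ≠ 0} ×ˢ cutSet G S).ncard := by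
        rw [ncard_prod, hleaves]
    _ = (Φ '' ({j | j ≠ 0} ×ˢ cutSet G S)).ncard := (ncard_image_of_injective _ hΦ).symm
    _ ≤ (crossingPairs (disjUnionStar G t) ρ).ncard := ncard_le_ncard hsub
    _ = slCr (disjUnionStar G t) ρ := (slCr_eq_ncard_crossingPairs _ _).symm

theorem exists_injective_star_order [Countable V] (S : Set V) :
    ∃ χ : V ⊕ Fin (t + 1) → ℝ, Injective χ ∧ ∀ j ≠ 0, ∀ a ∈ S, ∀ b ∉ S,
      χ (Sum.inr j) < χ (Sum.inl a) ∧ χ (Sum.inl a) < χ (Sum.inr 0) ∧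
        χ (Sum.inr 0) < χ (Sum.inl b) := by
  classical
  obtain ⟨f, hf⟩ := exists_injective_nat V
  set x : V → ℝ := fun v => ((f v : ℝ) + 2)⁻¹
  have hx0 : ∀ v, 0 < x v := fun v => by positivity
  have hx1 : ∀ v, x v < 1 := fun v =>
    inv_lt_one_of_one_lt₀ (by linarith [Nat.cast_nonneg (α := ℝ) (f v)])
  have hxinj : Injective x := fun v w h => hf (by simpa [x] using h)
  have habs : ∀ v, |if v ∈ S then -x v else x v| = x v := fun v => by
    split_ifs <;> simp [abs_of_pos (hx0 v)]
  refine ⟨Sum.elim (fun v => if v ∈ S then -x v else x v) (fun j => -((j : ℕ) : ℝ)), ?_, ?_⟩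
  · refine Injective.sumElim (fun v w h => hxinj (by rw [← habs v, ← habs w, h]))
      (fun j k h => Fin.ext (by simpa using h)) (fun v j h => ?_)
    have hvj := congrArg abs h
    rw [habs, abs_neg, Nat.abs_cast] at hvj
    rcases Nat.eq_zero_or_pos (j : ℕ) with hj | hj
    · exact (hx0 v).ne' (by rw [hvj, hj, Nat.cast_zero])
    · exact (hx1 v).not_ge (hvj ▸ Nat.one_le_cast.2 hj)
  · intro j hj a ha b hb
    have hj1 : (1 : ℝ) ≤ (j : ℕ) := Nat.one_le_cast.2 (Fin.pos_iff_ne_zero.2 hj)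
    simp only [Sum.elim_inl, Sum.elim_inr, if_pos ha, if_neg hb, Fin.val_zero, Nat.cast_zero,
      neg_zero]
    exact ⟨by linarith [hx1 a], by linarith [hx0 a], hx0 b⟩

theorem exists_isSLDrawing_mul_maxCut_le_slCr [Finite V] (G : SimpleGraph V) (t : ℕ) :
    ∃ ρ : V ⊕ Fin (t + 1) → ℝ × ℝ, IsSLDrawing (disjUnionStar G t) ρ ∧
      t * maxCut G ≤ slCr (disjUnionStar G t) ρ := by
  obtain ⟨S, hS⟩ := exists_ncard_cutSet_eq_maxCut G
  obtain ⟨χ, hχ, horder⟩ := exists_injective_star_order (t := t) S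
  refine ⟨parabola ∘ χ, isSLDrawing_parabola_comp _ hχ,
    hS ▸ mul_ncard_cutSet_le_slCr S fun j hj a ha b hb => ?_⟩
  obtain ⟨h1, h2, h3⟩ := horder j hj a ha b hb
  rw [openSegment_symm]
  exact openSegment_parabola_inter_nonempty h1 h2 h3

end DisjUnionStar

theorem sSup_div_eq_of_forall_lt_of_exists_le {K : Set ℕ} {t c : ℕ}
    (hlt : ∀ k ∈ K, k < t * (c + 1)) (hle : ∃ k ∈ K, t * c ≤ k) : sSup K / t = c := by
  obtain ⟨k, hk, hck⟩ := hle
  have hbdd : BddAbove K := ⟨_, fun k hk => (hlt k hk).le⟩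
  refine Nat.div_eq_of_lt_le ?_ ?_
  · rw [mul_comm]
    exact hck.trans (le_csSup hbdd hk)
  · rw [mul_comm]
    exact hlt _ (Nat.sSup_mem ⟨k, hk⟩ hbdd)

/-- Adding a star with `t = C(m,2) + 1` edges to a graph `G` with `m` edges makes the
maximum rectilinear crossing number encode `mcut(G)`: every straight-line drawing of
`G' = G + K_{1,t}` has fewer than `t·(mcut(G)+1)` crossings, some straight-line drawing
has at least `t·mcut(G)` crossings, and hence the maximum number of crossings divided by
`t` (rounded down) equals `mcut(G)`. -/
theorem star_augmented_crossing_encodes_maxcut {V : Type*} [Fintype V]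
    (G : SimpleGraph V) (t : ℕ) (ht : t = Nat.choose G.edgeSet.ncard 2 + 1) :
    (∀ ρ : V ⊕ Fin (t + 1) → ℝ × ℝ, IsSLDrawing (disjUnionStar G t) ρ →
        slCr (disjUnionStar G t) ρ < t * (maxCut G + 1)) ∧
    (∃ ρ : V ⊕ Fin (t + 1) → ℝ × ℝ, IsSLDrawing (disjUnionStar G t) ρ ∧
        t * maxCut G ≤ slCr (disjUnionStar G t) ρ) ∧
    (sSup {k : ℕ | ∃ ρ : V ⊕ Fin (t + 1) → ℝ × ℝ,
        IsSLDrawing (disjUnionStar G t) ρ ∧ slCr (disjUnionStar G t) ρ = k}) / t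
      = maxCut G := by
  have upper : ∀ ρ : V ⊕ Fin (t + 1) → ℝ × ℝ, IsSLDrawing (disjUnionStar G t) ρ →
      slCr (disjUnionStar G t) ρ < t * (maxCut G + 1) := fun ρ hρ =>
    calc slCr (disjUnionStar G t) ρ ≤ G.edgeSet.ncard.choose 2 + t * maxCut G :=
          slCr_disjUnionStar_le hρ
      _ < t * (maxCut G + 1) := by rw [mul_add_one]; omega
  obtain ⟨ρ₀, hρ₀, hle⟩ := exists_isSLDrawing_mul_maxCut_le_slCr G t
  refine ⟨upper, ⟨ρ₀, hρ₀, hle⟩,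
    sSup_div_eq_of_forall_lt_of_exists_le ?_ ⟨_, ⟨ρ₀, hρ₀, rfl⟩, hle⟩⟩
  rintro k ⟨ρ, hρ, rfl⟩
  exact upper ρ hρ
end

section
/- A finite tree T (with its unique bipartition into the two color classes of a proper 2-coloring) admits a two-layer drawing with zero crossings if and only if T is a caterpillar. -/
/-- Two edges `e` and `f` of a bipartite graph with proper 2-coloring `C` cross in the
two-layer drawing in which vertices are placed on the layer given by their color, at
positions given by `p`:  writing `e = ab` and `f = cd` with `a, c` on one layer and
`b, d` on the other, the edges share no endpoint and their endpoints interleave. -/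
def TLColorCross {V : Type*} (C : V → Bool) (p : V → ℕ) (e f : Sym2 V) : Prop :=
  ∃ a b c d : V, e = s(a, b) ∧ f = s(c, d) ∧
    C b ≠ C a ∧ C c = C a ∧ C d = C b ∧ a ≠ c ∧ b ≠ d ∧
    ((p a < p c ∧ p d < p b) ∨ (p c < p a ∧ p b < p d))

/-- A caterpillar is a tree in which all vertices of degree at least 2 lie on a
common path. -/
def IsCaterpillar {V : Type*} (T : SimpleGraph V) : Prop :=
  ∃ (u v : V) (w : T.Walk u v), w.IsPath ∧
    ∀ x : V, 2 ≤ (T.neighborSet x).ncard → x ∈ w.support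

/-!
In a crossing-free two-layer drawing, of three legs of length two at a common vertex the
middle one crosses one of the others, so the tree contains no spider `S(2,2,2)`. In a tree
without a spider a longest path contains every vertex of degree at least two: a branch of
length two hanging off the path would lengthen it if attached near an end, and would form a
spider otherwise.

Conversely, let `d` be the distance from one end of the spine of a caterpillar. The layers
are the parity classes of `d`, and vertices are placed in order of `d`, a spine vertex after
the leaves at the same distance.
-/

theorem Finite.exists_injective_lt_imp_le {V : Type*} [Finite V] (k : V → ℕ) :
    ∃ p : V → ℕ, Function.Injective p ∧ ∀ x y, p x < p y → k x ≤ k y := by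
  have := Fintype.ofFinite V
  let e := Fintype.equivFin V
  let N := Fintype.card V
  have hdiv : ∀ x, (k x * N + e x) / N = k x ∧ (k x * N + e x) % N = e x := fun x => by
    have he := (e x).2
    refine ⟨?_, ?_⟩
    · rw [Nat.add_comm, Nat.add_mul_div_right _ _ (by omega), Nat.div_eq_of_lt he, zero_add]
    · rw [Nat.add_comm, Nat.add_mul_mod_self_right, Nat.mod_eq_of_lt he]
  refine ⟨fun x => k x * N + e x, fun x y h => e.injective (Fin.ext ?_), fun x y h => ?_⟩
  · rw [← (hdiv x).2, ← (hdiv y).2]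
    exact congrArg (· % N) h
  · rw [← (hdiv x).1, ← (hdiv y).1]
    exact Nat.div_le_div_right h.le

namespace SimpleGraph

variable {V : Type*} {G : SimpleGraph V}

def IsTwoLayerPlanar (G : SimpleGraph V) : Prop :=
  ∃ (C : V → Bool) (p : V → ℕ), (∀ a b : V, G.Adj a b → C a ≠ C b) ∧ Function.Injective p ∧
    ∀ e ∈ G.edgeSet, ∀ f ∈ G.edgeSet, ¬ TLColorCross C p e f

/-- The spider `S(2,2,2)`: three legs of length two at `c` (in a tree the `mᵢ` are
automatically distinct). -/
def HasSpider (G : SimpleGraph V) : Prop :=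
  ∃ c n₁ n₂ n₃ m₁ m₂ m₃ : V, n₁ ≠ n₂ ∧ n₁ ≠ n₃ ∧ n₂ ≠ n₃ ∧
    G.Adj c n₁ ∧ G.Adj c n₂ ∧ G.Adj c n₃ ∧
    G.Adj n₁ m₁ ∧ G.Adj n₂ m₂ ∧ G.Adj n₃ m₃ ∧ m₁ ≠ c ∧ m₂ ≠ c ∧ m₃ ≠ c

theorem IsTwoLayerPlanar.not_hasSpider (h : G.IsTwoLayerPlanar) : ¬ G.HasSpider := by
  obtain ⟨C, p, hC, hp, hnc⟩ := h
  have hC' : ∀ {c a b}, G.Adj c a → G.Adj c b → C a = C b := fun ha hb =>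
    (Bool.eq_not_iff.2 (hC _ _ ha).symm).trans (Bool.eq_not_iff.2 (hC _ _ hb).symm).symm
  -- `n₂ m` crosses `n₁ c` or `n₃ c`, according to the side of `c` on which `m` lies
  have middle : ∀ {c n₁ n₂ n₃ m : V}, G.Adj c n₁ → G.Adj c n₂ → G.Adj c n₃ → G.Adj n₂ m →
      m ≠ c → p n₁ < p n₂ → p n₂ < p n₃ → False := by
    intro c n₁ n₂ n₃ m h₁ h₂ h₃ hm hmc h₁₂ h₂₃
    rcases Nat.lt_or_gt_of_ne (hp.ne hmc) with hlt | hgt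
    · exact hnc _ hm _ h₁.symm ⟨n₂, m, n₁, c, rfl, rfl, (hC _ _ hm).symm, hC' h₁ h₂,
        hC' h₂.symm hm, ne_of_apply_ne p h₁₂.ne', hmc, Or.inr ⟨h₁₂, hlt⟩⟩
    · exact hnc _ hm _ h₃.symm ⟨n₂, m, n₃, c, rfl, rfl, (hC _ _ hm).symm, hC' h₃ h₂,
        hC' h₂.symm hm, ne_of_apply_ne p h₂₃.ne, hmc, Or.inl ⟨h₂₃, hgt⟩⟩
  rintro ⟨c, n₁, n₂, n₃, m₁, m₂, m₃, h₁₂, h₁₃, h₂₃, a₁, a₂, a₃, b₁, b₂, b₃, c₁, c₂, c₃⟩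
  have := hp.ne h₁₂
  have := hp.ne h₁₃
  have := hp.ne h₂₃
  rcases (by omega : p n₁ < p n₂ ∧ p n₂ < p n₃ ∨ p n₃ < p n₂ ∧ p n₂ < p n₁ ∨
      p n₂ < p n₁ ∧ p n₁ < p n₃ ∨ p n₃ < p n₁ ∧ p n₁ < p n₂ ∨
      p n₁ < p n₃ ∧ p n₃ < p n₂ ∨ p n₂ < p n₃ ∧ p n₃ < p n₁) with h | h | h | h | h | h
  · exact middle a₁ a₂ a₃ b₂ c₂ h.1 h.2
  · exact middle a₃ a₂ a₁ b₂ c₂ h.1 h.2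
  · exact middle a₂ a₁ a₃ b₁ c₁ h.1 h.2
  · exact middle a₃ a₁ a₂ b₁ c₁ h.1 h.2
  · exact middle a₁ a₃ a₂ b₃ c₃ h.1 h.2
  · exact middle a₂ a₃ a₁ b₃ c₃ h.1 h.2

theorem exists_isPath_forall_length_le [Fintype V] [Nonempty V] (G : SimpleGraph V) :
    ∃ (u v : V) (w : G.Walk u v), w.IsPath ∧
      ∀ ⦃u' v' : V⦄ (w' : G.Walk u' v'), w'.IsPath → w'.length ≤ w.length := by
  let L : Set ℕ := {n | ∃ (u v : V) (w : G.Walk u v), w.IsPath ∧ w.length = n}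
  have hne : L.Nonempty := ⟨0, Classical.arbitrary V, _, Walk.nil, Walk.IsPath.nil, rfl⟩
  have hbdd : BddAbove L :=
    ⟨Fintype.card V, by rintro _ ⟨u, v, w, hw, rfl⟩; exact hw.length_lt.le⟩
  obtain ⟨u, v, w, hw, hlen⟩ := Nat.sSup_mem hne hbdd
  exact ⟨u, v, w, hw, fun u' v' w' hw' => hlen ▸ le_csSup hbdd ⟨u', v', w', hw', rfl⟩⟩

theorem Walk.IsPath.one_lt_ncard_neighborSet [G.LocallyFinite] {u v z : V} {p : G.Walk u v}
    (hp : p.IsPath) (hz : z ∈ p.support) (hzu : z ≠ u) (hzv : z ≠ v) :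
    1 < (G.neighborSet z).ncard := by
  obtain ⟨i, rfl, hi⟩ := Walk.mem_support_iff_exists_getVert.1 hz
  have h0 : i ≠ 0 := by rintro rfl; exact hzu p.getVert_zero
  have hl : i ≠ p.length := by rintro rfl; exact hzv p.getVert_length
  refine (Set.one_lt_ncard_iff (Set.toFinite _)).2
    ⟨p.getVert (i - 1), p.getVert (i + 1), ?_, p.adj_getVert_succ (by omega), fun h => ?_⟩
  · simpa [Nat.sub_add_cancel (Nat.pos_of_ne_zero h0)] using
      (p.adj_getVert_succ (i := i - 1) (by omega)).symm
  · have := hp.getVert_injOn (by simp; omega) (by simp; omega) h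
    omega

theorem Connected.exists_branch_of_not_mem_support [G.LocallyFinite] (hG : G.Connected)
    {u v x : V} (w : G.Walk u v) (hx : x ∉ w.support) (hdeg : 1 < (G.neighborSet x).ncard) :
    ∃ y ∈ w.support, ∃ a ∉ w.support, ∃ b, G.Adj y a ∧ G.Adj a b ∧ b ≠ y := by
  obtain ⟨P, hP, -⟩ := hG.exists_path_of_dist x u
  obtain ⟨d, hd, ha, hy⟩ :=
    P.exists_boundary_dart {z | z ∉ w.support} hx (by simp [w.start_mem_support])
  have hdeg' : 1 < (G.neighborSet d.fst).ncard := by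
    by_cases hax : d.fst = x
    · rwa [hax]
    · exact hP.one_lt_ncard_neighborSet (P.dart_fst_mem_support_of_mem_darts hd) hax
        fun h => ha (h ▸ w.start_mem_support)
  obtain ⟨b, hb, hby⟩ := Set.exists_ne_of_one_lt_ncard hdeg' d.snd
  exact ⟨d.snd, not_not.1 hy, d.fst, ha, b, d.adj.symm, hb, hby⟩

theorem IsAcyclic.isPath_cons_cons (hG : G.IsAcyclic) {y v a b : V} {p : G.Walk y v}
    (hp : p.IsPath) (hya : G.Adj y a) (hab : G.Adj a b) (ha : a ∉ p.support) (hby : b ≠ y) :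
    (Walk.cons hab.symm (Walk.cons hya.symm p)).IsPath := by
  have hq : (Walk.cons hya.symm p).IsPath := hp.cons ha
  refine hq.cons fun hb => hby ?_
  simpa using hG.eq_snd_of_adj_start hq hab hb

theorem Walk.IsPath.hasSpider {u v a b : V} {w : G.Walk u v} (hw : w.IsPath) {i : ℕ}
    (hi₁ : 2 ≤ i) (hi₂ : i + 2 ≤ w.length) (hya : G.Adj (w.getVert i) a)
    (ha : a ∉ w.support) (hab : G.Adj a b) (hby : b ≠ w.getVert i) : G.HasSpider := by
  have hinj : ∀ {j k}, j ≤ w.length → k ≤ w.length → j ≠ k → w.getVert j ≠ w.getVert k :=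
    fun hj hk hjk h => hjk (hw.getVert_injOn hj hk h)
  have hadj : ∀ {j}, j < w.length → G.Adj (w.getVert j) (w.getVert (j + 1)) :=
    w.adj_getVert_succ
  have hoff : ∀ j, w.getVert j ≠ a := fun j h => ha (h ▸ w.getVert_mem_support j)
  refine ⟨w.getVert i, w.getVert (i - 1), w.getVert (i + 1), a, w.getVert (i - 2),
    w.getVert (i + 2), b, hinj (by omega) (by omega) (by omega), hoff _, hoff _, ?_,
    hadj (by omega), hya, ?_, hadj (by omega), hab, hinj (by omega) (by omega) (by omega),
    hinj (by omega) (by omega) (by omega), hby⟩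
  · simpa [show i - 1 + 1 = i by omega] using (hadj (j := i - 1) (by omega)).symm
  · simpa [show i - 2 + 1 = i - 1 by omega] using (hadj (j := i - 2) (by omega)).symm

theorem IsTree.isCaterpillar_of_not_hasSpider [Fintype V] (hT : G.IsTree)
    (hS : ¬ G.HasSpider) : IsCaterpillar G := by
  classical
  have := hT.connected.nonempty
  obtain ⟨u, v, w, hw, hmax⟩ := exists_isPath_forall_length_le G
  refine ⟨u, v, w, hw, fun x hx => by_contra fun hxw => ?_⟩
  obtain ⟨y, hy, a, ha, b, hya, hab, hby⟩ :=
    hT.connected.exists_branch_of_not_mem_support w hxw hx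
  obtain ⟨i, rfl, hi⟩ := Walk.mem_support_iff_exists_getVert.1 hy
  have extend : ∀ {s t} (w' : G.Walk s t) (j : ℕ), w'.IsPath → a ∉ w'.support →
      G.Adj (w'.getVert j) a → b ≠ w'.getVert j → w'.length - j + 1 < w.length :=
    fun w' j hw' ha' hya' hby' => by
      simpa using hmax _ (hT.isAcyclic.isPath_cons_cons (hw'.drop j) hya' hab
        (fun h => ha' ((w'.isSubwalk_drop j).support_subset h)) hby')
  by_cases h₁ : i ≤ 1
  · have := extend w i hw ha hya hby
    omega
  by_cases h₂ : w.length ≤ i + 1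
  · have hrev : w.reverse.getVert (w.length - i) = w.getVert i := by
      rw [Walk.getVert_reverse, Nat.sub_sub_self hi]
    have := extend w.reverse (w.length - i) hw.reverse (by simpa using ha) (hrev ▸ hya)
      (hrev ▸ hby)
    simp only [Walk.length_reverse] at this
    omega
  exact hS (hw.hasSpider (by omega) (by omega) hya ha hab hby)

theorem IsAcyclic.length_eq_dist (hG : G.IsAcyclic) {u v : V} {p : G.Walk u v}
    (hp : p.IsPath) : p.length = G.dist u v := by
  obtain ⟨q, hq, hlen⟩ := p.reachable.exists_path_of_dist
  rw [← hlen, Subtype.mk.inj ((hG.subsingleton_path u v).elim ⟨p, hp⟩ ⟨q, hq⟩)]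

theorem IsAcyclic.getVert_dist (hG : G.IsAcyclic) {u v x : V} {w : G.Walk u v}
    (hw : w.IsPath) (hx : x ∈ w.support) : w.getVert (G.dist u x) = x := by
  classical
  rw [← hG.length_eq_dist (hw.takeUntil hx), w.getVert_length_takeUntil hx]

theorem Connected.exists_adj_dist_lt (hG : G.Connected) {u x : V} (hx : x ≠ u) :
    ∃ z, G.Adj x z ∧ G.dist u z < G.dist u x := by
  obtain ⟨p, hp⟩ := hG.exists_walk_length_eq_dist x u
  cases p with
  | nil => exact absurd rfl hx
  | cons h q =>
    refine ⟨_, h, ?_⟩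
    rw [dist_comm, dist_comm (u := u), ← hp, Walk.length_cons]
    exact Nat.lt_succ_of_le (dist_le q)

/-- Odd keys `2i + 1` are meant for the spine vertices in order, even keys `2i + 2` for the
leaves hanging from the `i`-th one. Vertices are placed in order of their key, with the
parity of `k / 2` as layer. -/
theorem isTwoLayerPlanar_of_key [Finite V] (k : V → ℕ)
    (hadj : ∀ ⦃x y⦄, G.Adj x y → k x % 2 = 1 ∧ (k y = k x + 1 ∨ k y = k x + 2) ∨
      k y % 2 = 1 ∧ (k x = k y + 1 ∨ k x = k y + 2))
    (hinj : ∀ ⦃x y⦄, k x % 2 = 1 → k x = k y → x = y) : G.IsTwoLayerPlanar := by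
  obtain ⟨p, hp, hpk⟩ := Finite.exists_injective_lt_imp_le k
  -- distinct vertices with the same key are leaves hanging from one spine vertex
  have hshare : ∀ ⦃a b c d⦄, G.Adj a b → G.Adj c d → k a = k c → a ≠ c → b = d := by
    intro a b c d hab hcd hac hne
    have : k a % 2 = 0 := by
      by_contra h
      exact hne (hinj (by omega) hac)
    have := hadj hab
    have := hadj hcd
    exact hinj (x := b) (by omega) (by omega)
  have hcross : ∀ ⦃a b c d⦄, G.Adj a b → G.Adj c d → k a / 2 % 2 = k c / 2 % 2 →
      k b / 2 % 2 = k d / 2 % 2 → a ≠ c → b ≠ d → p a < p c → p d < p b → False := by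
    intro a b c d hab hcd hac hbd hne hne' h₁ h₂
    have := hpk _ _ h₁
    have := hpk _ _ h₂
    have : k a ≠ k c := fun h => hne' (hshare hab hcd h hne)
    have : k d ≠ k b := fun h => hne (hshare hab.symm hcd.symm h.symm hne')
    have := hadj hab
    have := hadj hcd
    omega
  refine ⟨fun x => decide (k x / 2 % 2 = 0), p, fun x y h => ?_, hp, ?_⟩
  · have := hadj h
    simp only [ne_eq, decide_eq_decide]
    omega
  · rintro _ hab _ hcd ⟨a, b, c, d, rfl, rfl, -, hca, hdb, hne, hne', h | h⟩ <;>
      simp only [mem_edgeSet, decide_eq_decide] at hab hcd hca hdb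
    · exact hcross hab hcd (by omega) (by omega) hne hne' h.1 h.2
    · exact hcross hcd hab (by omega) (by omega) hne.symm hne'.symm h.1 h.2

theorem IsTree.isTwoLayerPlanar_of_isCaterpillar [Finite V] (hT : G.IsTree)
    (h : IsCaterpillar G) : G.IsTwoLayerPlanar := by
  classical
  obtain ⟨u, v, w, hw, hcov⟩ := h
  have hspine : ∀ ⦃x y⦄, G.Adj x y → G.dist u y = G.dist u x + 1 → x ∈ w.support := by
    intro x y hxy hd
    by_cases hxu : x = u
    · exact hxu ▸ w.start_mem_support
    obtain ⟨z, hxz, hz⟩ := hT.connected.exists_adj_dist_lt hxu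
    exact hcov x
      ((Set.one_lt_ncard_iff (Set.toFinite _)).2 ⟨z, y, hxz, hxy, by rintro rfl; omega⟩)
  refine isTwoLayerPlanar_of_key (fun x => 2 * G.dist u x + if x ∈ w.support then 1 else 0)
    (fun x y hxy => ?_) (fun x y hx hxy => ?_)
  · rcases hT.dist_eq_dist_add_one_of_adj u hxy with h | h
    · have := hspine hxy.symm h
      split_ifs <;> omega
    · have := hspine hxy h
      split_ifs <;> omega
  · have hxS : x ∈ w.support := by
      by_contra h
      simp [h] at hx
    have hyS : y ∈ w.support := by
      by_contra h
      simp [h] at hxy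
      omega
    simp only [hxS, hyS, if_true] at hxy
    rw [← hT.isAcyclic.getVert_dist hw hxS, ← hT.isAcyclic.getVert_dist hw hyS]
    congr 1
    omega

end SimpleGraph

/-- A finite tree admits a two-layer drawing with zero crossings (with respect to its
bipartition into the two color classes of a proper 2-coloring) if and only if it is a
caterpillar. -/
theorem tree_two_layer_planar_iff_caterpillar {V : Type*} [Fintype V]
    (T : SimpleGraph V) (hT : T.IsTree) :
    (∃ (C : V → Bool) (p : V → ℕ),
        (∀ a b : V, T.Adj a b → C a ≠ C b) ∧ Function.Injective p ∧
        ∀ e ∈ T.edgeSet, ∀ f ∈ T.edgeSet, ¬ TLColorCross C p e f) ↔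
      IsCaterpillar T :=
  ⟨fun h => hT.isCaterpillar_of_not_hasSpider (SimpleGraph.IsTwoLayerPlanar.not_hasSpider h),
    hT.isTwoLayerPlanar_of_isCaterpillar⟩
end
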